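/- Let G be a locally compact second countable group with left Haar measure μ, d ≥ 2 an integer, f ∈ L¹(G, μ), and let φ : G → ℂ be an M_d-multiplier. Then the convolution f * φ, defined by (f * φ)(x) = ∫_G f(y) φ(y⁻¹x) dμ(y), is again an M_d-multiplier, and ‖f * φ‖_{M_d} ≤ ‖f‖₁ · ‖φ‖_{M_d}. More precisely, for every factorization of φ of constant C there is a factorization of f * φ of constant at most ‖f‖₁ · C. -/

import Mathlib

open ComplexConjugate Filter Topology
open scoped ComplexInnerProductSpace

universe u

/-- A factorization of length `d` of a function `φ : G → ℂ` consists of complex Hilbert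
spaces `H 0, …, H d` with `H 0 = H d = ℂ` (witnessed by the linear isometric isomorphisms
`e0`, `ed`) together with bounded maps `xi i : G → B(H (i+1), H i)` such that
`φ (x 1 * ⋯ * x d)` equals `xi 1 (x 1) ∘ ⋯ ∘ xi d (x d)` applied to `1 ∈ ℂ = H d`,
read in `H 0 = ℂ`. -/
structure Factorization (d : ℕ) (G : Type*) [Group G] (φ : G → ℂ) where
  H : Fin (d + 1) → Type u
  [normed : ∀ i, NormedAddCommGroup (H i)]
  [ips : ∀ i, InnerProductSpace ℂ (H i)]
  [complete : ∀ i, CompleteSpace (H i)]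
  e0 : H 0 ≃ₗᵢ[ℂ] ℂ
  ed : H (Fin.last d) ≃ₗᵢ[ℂ] ℂ
  xi : ∀ i : Fin d, G → (H i.succ →L[ℂ] H i.castSucc)
  bdd : ∀ i : Fin d, ∃ M : ℝ, ∀ x : G, ‖xi i x‖ ≤ M
  factor : ∀ x : Fin d → G,
    φ (List.ofFn x).prod =
      e0 (Fin.reverseInduction (motive := fun i => H i) (ed.symm 1)
        (fun j v => xi j (x j) v) 0)

attribute [instance] Factorization.normed Factorization.ips Factorization.complete

namespace Factorization

variable {d : ℕ} {G : Type*} [Group G] {φ : G → ℂ}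

/-- The constant of a factorization, `∏ i, sup_x ‖xi i x‖`. -/
noncomputable def const (F : Factorization d G φ) : ℝ :=
  ∏ i : Fin d, ⨆ x : G, ‖F.xi i x‖

/-- The partial right product `xi (i+1) (x (i+1)) ⋯ xi d (x d) (1) ∈ H i`. -/
noncomputable def rightVec (F : Factorization d G φ) (x : Fin d → G) (i : Fin (d + 1)) :
    F.H i :=
  Fin.reverseInduction (motive := fun i => F.H i) (F.ed.symm 1)
    (fun j v => F.xi j (x j) v) i

/-- The partial left product `(xi 1 (x 1) ⋯ xi i (x i))^* (1) ∈ H i`. -/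
noncomputable def leftVec (F : Factorization d G φ) (x : Fin d → G) (i : Fin (d + 1)) :
    F.H i :=
  Fin.induction (motive := fun i => F.H i) (F.e0.symm 1)
    (fun j w => ContinuousLinearMap.adjoint (F.xi j (x j)) w) i

end Factorization

/-- `φ` is an `M_d`-multiplier: a bounded continuous function admitting a factorization
of length `d`. -/
def IsMdMultiplier (d : ℕ) {G : Type*} [Group G] [TopologicalSpace G] (φ : G → ℂ) : Prop :=
  Continuous φ ∧ (∃ M : ℝ, ∀ x : G, ‖φ x‖ ≤ M) ∧ Nonempty (Factorization.{0} d G φ)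

/-- The `M_d`-multiplier norm `‖φ‖_{M_d}`: the infimum of the constants over all
factorizations of length `d` of `φ`. -/
noncomputable def MdNorm (d : ℕ) {G : Type*} [Group G] (φ : G → ℂ) : ℝ :=
  sInf {C : ℝ | ∃ F : Factorization.{0} d G φ, F.const = C}

/-- A chain of bounded linear maps `eta i : L¹(G, μ) → B(K (i+1), K i)` between complex
Hilbert spaces `K 0, …, K d` with `K 0 = K d = ℂ`. -/
structure L1Chain (d : ℕ) {G : Type*} [Group G] [MeasurableSpace G]
    (μ : MeasureTheory.Measure G) where
  K : Fin (d + 1) → Type u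
  [normed : ∀ i, NormedAddCommGroup (K i)]
  [ips : ∀ i, InnerProductSpace ℂ (K i)]
  [complete : ∀ i, CompleteSpace (K i)]
  e0 : K 0 ≃ₗᵢ[ℂ] ℂ
  ed : K (Fin.last d) ≃ₗᵢ[ℂ] ℂ
  eta : ∀ i : Fin d, MeasureTheory.Lp ℂ 1 μ →L[ℂ] (K i.succ →L[ℂ] K i.castSucc)

attribute [instance] L1Chain.normed L1Chain.ips L1Chain.complete

open MeasureTheory

/-- Convolution of two functions on a group: `(f ∗ g) x = ∫ f y * g (y⁻¹ * x) dμ y`. -/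
noncomputable def conv {G : Type*} [Group G] [MeasurableSpace G] (μ : Measure G)
    (f g : G → ℂ) : G → ℂ :=
  fun x => ∫ y, f y * g (y⁻¹ * x) ∂μ

/-- Iterated convolution of a (nonempty) list of functions. -/
noncomputable def convProd {G : Type*} [Group G] [MeasurableSpace G] (μ : Measure G) :
    List (G → ℂ) → (G → ℂ)
  | [] => fun _ => 0
  | [f] => f
  | f :: g :: l => conv μ f (convProd μ (g :: l))

namespace L1Chain

variable {d : ℕ} {G : Type*} [Group G] [MeasurableSpace G] {μ : Measure G}

/-- The constant `∏ i, ‖eta i‖` of a chain. -/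
noncomputable def const (E : L1Chain d μ) : ℝ :=
  ∏ i : Fin d, ‖E.eta i‖

/-- The partial right product `eta (i+1) (f (i+1)) ⋯ eta d (f d) (1) ∈ K i`. -/
noncomputable def rightVec (E : L1Chain d μ) (f : Fin d → Lp ℂ 1 μ) (i : Fin (d + 1)) :
    E.K i :=
  Fin.reverseInduction (motive := fun i => E.K i) (E.ed.symm 1)
    (fun j v => E.eta j (f j) v) i

/-- The partial left product `(eta 1 (f 1) ⋯ eta i (f i))^* (1) ∈ K i`. -/
noncomputable def leftVec (E : L1Chain d μ) (f : Fin d → Lp ℂ 1 μ) (i : Fin (d + 1)) :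
    E.K i :=
  Fin.induction (motive := fun i => E.K i) (E.e0.symm 1)
    (fun j w => ContinuousLinearMap.adjoint (E.eta j (f j)) w) i

/-- The scalar `eta 1 (f 1) ⋯ eta d (f d) (1) ∈ ℂ`. -/
noncomputable def apply (E : L1Chain d μ) (f : Fin d → Lp ℂ 1 μ) : ℂ :=
  E.e0 (E.rightVec f 0)

end L1Chain

/-!
Average the first leg against `f`: put `ξ₁'(x) = ∫ f(y) ξ₁(y⁻¹x) dμ(y)` and keep the other
legs, so that `ξ₁'(x₁) ξ₂(x₂) ⋯ ξ_d(x_d)(1) = ∫ f(y) φ(y⁻¹x₁x₂⋯x_d) dμ(y)` and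
`sup ‖ξ₁'‖ ≤ ‖f‖₁ sup ‖ξ₁‖`. The integral is taken weakly, and since the legs are arbitrary
bounded maps, `y ↦ ξ₁(y⁻¹x)v` need not be measurable. It is, however, for `v` in the closed span
`S` of the vectors `ξ₂(x₂) ⋯ ξ_d(x_d)(1)`: there it is a pointwise limit of linear combinations of
translates of the continuous `φ`. Composing with the orthogonal projection onto `S` changes
nothing on those vectors and keeps the norm bound.
-/

section WeakIntegral

variable {𝕜 X E : Type*} [RCLike 𝕜] [MeasurableSpace X] [NormedAddCommGroup E]
  [NormedSpace 𝕜 E]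

theorem measurable_apply_of_mem_closure_span (T : X → E →L[𝕜] 𝕜) {s : Set E}
    (hs : ∀ w ∈ s, Measurable fun y => T y w) {v : E}
    (hv : v ∈ (Submodule.span 𝕜 s).topologicalClosure) : Measurable fun y => T y v := by
  have hspan : ∀ w ∈ Submodule.span 𝕜 s, Measurable fun y => T y w := by
    intro w hw
    induction hw using Submodule.span_induction with
    | mem w hw => exact hs w hw
    | zero => simp only [map_zero]; exact measurable_const
    | add a b _ _ ha hb => simp only [map_add]; exact ha.add hb
    | smul c a _ ha => simp only [map_smul, smul_eq_mul]; exact ha.const_mul c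
  rw [← SetLike.mem_coe, Submodule.topologicalClosure_coe] at hv
  obtain ⟨u, hu, hlim⟩ := mem_closure_iff_seq_limit.1 hv
  exact measurable_of_tendsto_metrizable' atTop (fun k => hspan (u k) (hu k))
    (tendsto_pi_nhds.2 fun y => ((T y).continuous.tendsto v).comp hlim)

variable {μ : Measure X} {f : X → 𝕜} {g : X → E →L[𝕜] 𝕜} {M : ℝ}

theorem norm_integral_mul_apply_le (hf : Integrable f μ) (hM : ∀ y, ‖g y‖ ≤ M) (v : E) :
    ‖∫ y, f y * g y v ∂μ‖ ≤ (∫ y, ‖f y‖ ∂μ) * M * ‖v‖ := by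
  calc ‖∫ y, f y * g y v ∂μ‖ ≤ ∫ y, ‖f y‖ * (M * ‖v‖) ∂μ :=
        norm_integral_le_of_norm_le (hf.norm.mul_const _) (ae_of_all _ fun y => by
          rw [norm_mul]; gcongr; exact (g y).le_of_opNorm_le (hM y) v)
    _ = (∫ y, ‖f y‖ ∂μ) * M * ‖v‖ := by rw [integral_mul_const, mul_assoc]

noncomputable def weakIntegralCLM (hf : Integrable f μ) (hM : ∀ y, ‖g y‖ ≤ M)
    (hg : ∀ v, AEStronglyMeasurable (fun y => g y v) μ) : E →L[𝕜] 𝕜 :=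
  have hint : ∀ v, Integrable (fun y => f y * g y v) μ := fun v =>
    hf.mul_bdd (hg v) (ae_of_all _ fun y => (g y).le_of_opNorm_le (hM y) v)
  LinearMap.mkContinuous
    { toFun := fun v => ∫ y, f y * g y v ∂μ
      map_add' := fun v w => by
        simp only [map_add, mul_add]; exact integral_add (hint v) (hint w)
      map_smul' := fun c v => by
        simp only [map_smul, smul_eq_mul, mul_left_comm _ c, RingHom.id_apply]
        exact integral_const_mul c _ }
    ((∫ y, ‖f y‖ ∂μ) * M) (norm_integral_mul_apply_le hf hM)

theorem weakIntegralCLM_apply (hf : Integrable f μ) (hM : ∀ y, ‖g y‖ ≤ M)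
    (hg : ∀ v, AEStronglyMeasurable (fun y => g y v) μ) (v : E) :
    weakIntegralCLM hf hM hg v = ∫ y, f y * g y v ∂μ := rfl

theorem norm_weakIntegralCLM_le (hf : Integrable f μ) (hM : ∀ y, ‖g y‖ ≤ M)
    (hg : ∀ v, AEStronglyMeasurable (fun y => g y v) μ) (hM₀ : 0 ≤ M) :
    ‖weakIntegralCLM hf hM hg‖ ≤ (∫ y, ‖f y‖ ∂μ) * M :=
  LinearMap.mkContinuous_norm_le _ (by positivity) (norm_integral_mul_apply_le hf hM)

end WeakIntegral

namespace Factorization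

section Basic

variable {d : ℕ} {G : Type*} [Group G] {φ : G → ℂ}

theorem rightVec_last (F : Factorization d G φ) (x : Fin d → G) :
    F.rightVec x (Fin.last d) = F.ed.symm 1 :=
  Fin.reverseInduction_last

theorem rightVec_castSucc (F : Factorization d G φ) (x : Fin d → G) (j : Fin d) :
    F.rightVec x j.castSucc = F.xi j (x j) (F.rightVec x j.succ) :=
  Fin.reverseInduction_castSucc _

theorem rightVec_congr (F : Factorization d G φ) {x y : Fin d → G} (i : Fin (d + 1))
    (h : ∀ j : Fin d, i ≤ j.castSucc → x j = y j) : F.rightVec x i = F.rightVec y i := by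
  induction i using Fin.reverseInduction with
  | last => rw [rightVec_last, rightVec_last]
  | cast j ih =>
    rw [rightVec_castSucc, rightVec_castSucc, h j le_rfl,
      ih fun k hk => h k (Fin.castSucc_lt_succ.le.trans hk)]

theorem const_nonneg (F : Factorization d G φ) : 0 ≤ F.const :=
  Finset.prod_nonneg fun _ _ => Real.iSup_nonneg fun _ => norm_nonneg _

theorem norm_xi_le_iSup (F : Factorization d G φ) (i : Fin d) (x : G) :
    ‖F.xi i x‖ ≤ ⨆ y, ‖F.xi i y‖ :=
  have ⟨M, hM⟩ := F.bdd i
  le_ciSup ⟨M, by rintro _ ⟨y, rfl⟩; exact hM y⟩ x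

noncomputable def rightSpan (F : Factorization d G φ) (i : Fin (d + 1)) : Submodule ℂ (F.H i) :=
  (Submodule.span ℂ (Set.range fun z => F.rightVec z i)).topologicalClosure

instance (F : Factorization d G φ) (i : Fin (d + 1)) : (F.rightSpan i).HasOrthogonalProjection :=
  inferInstanceAs (Submodule.topologicalClosure _).HasOrthogonalProjection

end Basic

section FirstLeg

variable {n : ℕ} {G : Type*} [Group G] {φ : G → ℂ}

theorem e0_xi_zero_rightVec_succ_zero (F : Factorization (n + 1) G φ) (g : G)
    (z : Fin (n + 1) → G) :
    F.e0 (F.xi 0 g (F.rightVec z (Fin.succ 0))) = φ (g * (List.ofFn (Fin.tail z)).prod) := by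
  have h := F.factor (Fin.cons g (Fin.tail z))
  rw [List.ofFn_succ, List.prod_cons, Fin.cons_zero] at h
  simp only [Fin.cons_succ] at h
  rw [h]
  change _ = F.e0 (F.rightVec _ (Fin.castSucc 0))
  rw [rightVec_castSucc, Fin.cons_zero]
  congr 2
  refine F.rightVec_congr _ fun k hk => ?_
  obtain ⟨k, rfl⟩ := Fin.exists_succ_eq.2 (show k ≠ 0 by rintro rfl; simp at hk)
  rfl

theorem reverseInduction_update_xi_zero (F : Factorization (n + 1) G φ)
    (L : G → (F.H (Fin.succ 0) →L[ℂ] F.H (Fin.castSucc 0))) (x : Fin (n + 1) → G)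
    (i : Fin (n + 2)) (hi : i ≠ 0) :
    Fin.reverseInduction (motive := fun i => F.H i) (F.ed.symm 1)
      (fun j v => Function.update F.xi 0 L j (x j) v) i = F.rightVec x i := by
  induction i using Fin.reverseInduction with
  | last => rw [Fin.reverseInduction_last, rightVec_last]
  | cast j ih =>
    have hj : j ≠ 0 := by rintro rfl; exact hi rfl
    rw [Fin.reverseInduction_castSucc, rightVec_castSucc, Function.update_of_ne hj,
      ih (Fin.succ_ne_zero j)]

noncomputable def updateFirstLeg (F : Factorization.{u} (n + 1) G φ) {ψ : G → ℂ}
    (L : G → (F.H (Fin.succ 0) →L[ℂ] F.H (Fin.castSucc 0))) (hL_bdd : ∃ M, ∀ x, ‖L x‖ ≤ M)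
    (hL : ∀ x, ψ (List.ofFn x).prod = F.e0 (L (x 0) (F.rightVec x (Fin.succ 0)))) :
    Factorization.{u} (n + 1) G ψ where
  H := F.H
  e0 := F.e0
  ed := F.ed
  xi := Function.update F.xi 0 L
  bdd i := by
    rcases eq_or_ne i 0 with rfl | hi
    · rw [Function.update_self]; exact hL_bdd
    · rw [Function.update_of_ne hi]; exact F.bdd i
  factor x := by
    change _ = F.e0 (Fin.reverseInduction (motive := fun i => F.H i) _ _ (Fin.castSucc 0))
    rw [Fin.reverseInduction_castSucc, Function.update_self,
      F.reverseInduction_update_xi_zero L x _ (Fin.succ_ne_zero 0), hL]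

theorem const_updateFirstLeg (F : Factorization.{u} (n + 1) G φ) {ψ : G → ℂ}
    (L : G → (F.H (Fin.succ 0) →L[ℂ] F.H (Fin.castSucc 0))) (hL_bdd : ∃ M, ∀ x, ‖L x‖ ≤ M)
    (hL : ∀ x, ψ (List.ofFn x).prod = F.e0 (L (x 0) (F.rightVec x (Fin.succ 0)))) :
    (F.updateFirstLeg L hL_bdd hL).const =
      (⨆ x, ‖L x‖) * ∏ j : Fin n, ⨆ x, ‖F.xi j.succ x‖ := by
  simp only [const, updateFirstLeg, Fin.prod_univ_succ, Function.update_self]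
  congr 1

noncomputable def firstLegCoeff (F : Factorization (n + 1) G φ) (x y : G) :
    F.H (Fin.succ 0) →L[ℂ] ℂ :=
  F.e0.toLinearIsometry.toContinuousLinearMap ∘L F.xi 0 (y⁻¹ * x) ∘L
    (F.rightSpan (Fin.succ 0)).starProjection

theorem firstLegCoeff_apply (F : Factorization (n + 1) G φ) (x y : G)
    (v : F.H (Fin.succ 0)) :
    F.firstLegCoeff x y v =
      F.e0 (F.xi 0 (y⁻¹ * x) ((F.rightSpan (Fin.succ 0)).starProjection v)) :=
  rfl

theorem norm_firstLegCoeff_le (F : Factorization (n + 1) G φ) (x y : G) :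
    ‖F.firstLegCoeff x y‖ ≤ ⨆ g, ‖F.xi 0 g‖ := by
  refine ContinuousLinearMap.opNorm_le_bound _ (Real.iSup_nonneg fun _ => norm_nonneg _)
    fun v => ?_
  rw [firstLegCoeff_apply]
  exact (F.e0.norm_map _).trans_le <| (F.xi 0 _).le_of_opNorm_le_of_le (F.norm_xi_le_iSup 0 _)
    (Submodule.norm_starProjection_apply_le _ v)

theorem firstLegCoeff_apply_rightVec (F : Factorization (n + 1) G φ) (x y : G)
    (z : Fin (n + 1) → G) :
    F.firstLegCoeff x y (F.rightVec z (Fin.succ 0)) =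
      φ (y⁻¹ * x * (List.ofFn (Fin.tail z)).prod) := by
  have hz : F.rightVec z (Fin.succ 0) ∈ F.rightSpan (Fin.succ 0) :=
    Submodule.le_topologicalClosure _ (Submodule.subset_span ⟨z, rfl⟩)
  rw [firstLegCoeff_apply, Submodule.starProjection_eq_self_iff.2 hz,
    e0_xi_zero_rightVec_succ_zero, mul_assoc]

end FirstLeg

section Convolution

variable {n : ℕ} {G : Type*} [Group G] [TopologicalSpace G] [IsTopologicalGroup G]
  [MeasurableSpace G] [BorelSpace G] {φ : G → ℂ}

theorem measurable_firstLegCoeff_apply (F : Factorization (n + 1) G φ) (hφ : Continuous φ)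
    (x : G) (v : F.H (Fin.succ 0)) : Measurable fun y => F.firstLegCoeff x y v := by
  refine measurable_apply_of_mem_closure_span
    (fun y => F.e0.toLinearIsometry.toContinuousLinearMap ∘L F.xi 0 (y⁻¹ * x)) ?_
    ((F.rightSpan (Fin.succ 0)).starProjection_apply_mem v)
  rintro _ ⟨z, rfl⟩
  change Measurable fun y => F.e0 (F.xi 0 (y⁻¹ * x) (F.rightVec z (Fin.succ 0)))
  simp_rw [e0_xi_zero_rightVec_succ_zero]
  exact (hφ.comp (by fun_prop)).measurable

variable (μ : Measure G) {f : G → ℂ}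

noncomputable def convFirstLeg (F : Factorization (n + 1) G φ) (hφ : Continuous φ)
    (hf : Integrable f μ) (x : G) : F.H (Fin.succ 0) →L[ℂ] F.H (Fin.castSucc 0) :=
  F.e0.symm.toLinearIsometry.toContinuousLinearMap ∘L
    weakIntegralCLM hf (F.norm_firstLegCoeff_le x)
      fun v => (F.measurable_firstLegCoeff_apply hφ x v).aestronglyMeasurable

theorem norm_convFirstLeg_le (F : Factorization (n + 1) G φ) (hφ : Continuous φ)
    (hf : Integrable f μ) (x : G) :
    ‖F.convFirstLeg μ hφ hf x‖ ≤ (∫ y, ‖f y‖ ∂μ) * ⨆ g, ‖F.xi 0 g‖ := by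
  have hW := norm_weakIntegralCLM_le hf (F.norm_firstLegCoeff_le x)
    (fun v => (F.measurable_firstLegCoeff_apply hφ x v).aestronglyMeasurable)
    (Real.iSup_nonneg fun _ => norm_nonneg _)
  refine ContinuousLinearMap.opNorm_le_bound _ ((norm_nonneg _).trans hW) fun v => ?_
  exact (F.e0.symm.norm_map _).trans_le ((ContinuousLinearMap.le_of_opNorm_le _ hW) v)

theorem conv_apply_eq_e0_convFirstLeg (F : Factorization (n + 1) G φ) (hφ : Continuous φ)
    (hf : Integrable f μ) (x : Fin (n + 1) → G) :
    conv μ f φ (List.ofFn x).prod =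
      F.e0 (F.convFirstLeg μ hφ hf (x 0) (F.rightVec x (Fin.succ 0))) := by
  change _ = F.e0 (F.e0.symm
    (weakIntegralCLM hf (F.norm_firstLegCoeff_le (x 0)) _ (F.rightVec x (Fin.succ 0))))
  rw [LinearIsometryEquiv.apply_symm_apply, weakIntegralCLM_apply]
  simp_rw [firstLegCoeff_apply_rightVec, List.ofFn_succ, List.prod_cons, mul_assoc]
  rfl

noncomputable def convFactorization (F : Factorization.{u} (n + 1) G φ) (hφ : Continuous φ)
    (hf : Integrable f μ) : Factorization.{u} (n + 1) G (conv μ f φ) :=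
  F.updateFirstLeg (F.convFirstLeg μ hφ hf) ⟨_, F.norm_convFirstLeg_le μ hφ hf⟩
    (F.conv_apply_eq_e0_convFirstLeg μ hφ hf)

theorem const_convFactorization_le (F : Factorization.{u} (n + 1) G φ) (hφ : Continuous φ)
    (hf : Integrable f μ) : (F.convFactorization μ hφ hf).const ≤ (∫ y, ‖f y‖ ∂μ) * F.const := by
  rw [convFactorization, const_updateFirstLeg, const, Fin.prod_univ_succ, ← mul_assoc]
  gcongr
  · exact Finset.prod_nonneg fun _ _ => Real.iSup_nonneg fun _ => norm_nonneg _
  · exact ciSup_le (F.norm_convFirstLeg_le μ hφ hf)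

theorem exists_const_le_conv (F : Factorization.{u} (n + 1) G φ) (hφ : Continuous φ)
    (hf : Integrable f μ) :
    ∃ F' : Factorization.{u} (n + 1) G (conv μ f φ), F'.const ≤ (∫ y, ‖f y‖ ∂μ) * F.const :=
  ⟨F.convFactorization μ hφ hf, F.const_convFactorization_le μ hφ hf⟩

end Convolution

end Factorization

section Convolution

variable {G : Type*} [Group G] [MeasurableSpace G] {μ : Measure G} {f φ : G → ℂ} {M : ℝ}

theorem norm_conv_le (hφ : ∀ x, ‖φ x‖ ≤ M) (hf : Integrable f μ) (x : G) :
    ‖conv μ f φ x‖ ≤ (∫ y, ‖f y‖ ∂μ) * M := by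
  calc ‖conv μ f φ x‖ ≤ ∫ y, ‖f y‖ * M ∂μ :=
        norm_integral_le_of_norm_le (hf.norm.mul_const M) (ae_of_all _ fun y => by
          rw [norm_mul]; gcongr; exact hφ _)
    _ = (∫ y, ‖f y‖ ∂μ) * M := integral_mul_const M _

theorem continuous_conv [TopologicalSpace G] [IsTopologicalGroup G] [FirstCountableTopology G]
    [BorelSpace G] (hφ : Continuous φ) (hφ_bdd : ∀ x, ‖φ x‖ ≤ M) (hf : Integrable f μ) :
    Continuous (conv μ f φ) :=
  continuous_of_dominated
    (fun x => hf.aestronglyMeasurable.mul (hφ.comp (by fun_prop)).aestronglyMeasurable)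
    (fun x => ae_of_all _ fun y => by rw [norm_mul]; gcongr; exact hφ_bdd _)
    (hf.norm.mul_const M) (ae_of_all _ fun y => by fun_prop)

end Convolution

theorem mdNorm_le_mul_of_forall_exists {d : ℕ} {G : Type*} [Group G] {φ ψ : G → ℂ} {a : ℝ}
    (ha : 0 ≤ a) (hφ : Nonempty (Factorization.{0} d G φ))
    (h : ∀ F : Factorization.{0} d G φ, ∃ F' : Factorization.{0} d G ψ,
      F'.const ≤ a * F.const) :
    MdNorm d ψ ≤ a * MdNorm d φ := by
  obtain ⟨F₀⟩ := hφ
  have hbdd : BddBelow {C | ∃ F : Factorization.{0} d G ψ, F.const = C} :=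
    ⟨0, by rintro _ ⟨F, rfl⟩; exact F.const_nonneg⟩
  rw [MdNorm, MdNorm, ← smul_eq_mul, ← Real.sInf_smul_of_nonneg ha]
  refine le_csInf (Set.Nonempty.smul_set ⟨F₀.const, F₀, rfl⟩) ?_
  rintro _ ⟨_, ⟨F, rfl⟩, rfl⟩
  obtain ⟨F', hF'⟩ := h F
  exact (csInf_le hbdd ⟨F', rfl⟩).trans hF'

theorem isMdMultiplier_conv_general
    {G : Type*} [Group G] [TopologicalSpace G] [IsTopologicalGroup G]
    [SecondCountableTopology G]
    [MeasurableSpace G] [BorelSpace G] (μ : Measure G)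
    (d : ℕ) (hd : 2 ≤ d)
    (f : G → ℂ) (hf : Integrable f μ)
    (φ : G → ℂ) (hφ : IsMdMultiplier d φ) :
    IsMdMultiplier d (conv μ f φ) ∧
    MdNorm d (conv μ f φ) ≤ (∫ y, ‖f y‖ ∂μ) * MdNorm d φ ∧
    ∀ F : Factorization.{u} d G φ,
      ∃ F' : Factorization.{u} d G (conv μ f φ),
        F'.const ≤ (∫ y, ‖f y‖ ∂μ) * F.const := by
  obtain ⟨m, rfl⟩ : ∃ m, d = m + 1 := ⟨d - 1, by omega⟩
  obtain ⟨hφc, ⟨M, hM⟩, ⟨F₀⟩⟩ := hφ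
  exact ⟨⟨continuous_conv hφc hM hf, ⟨_, norm_conv_le hM hf⟩, ⟨F₀.convFactorization μ hφc hf⟩⟩,
    mdNorm_le_mul_of_forall_exists (integral_nonneg fun _ => norm_nonneg _) ⟨F₀⟩
      fun F => F.exists_const_le_conv μ hφc hf,
    fun F => F.exists_const_le_conv μ hφc hf⟩

/-- If `f ∈ L¹(G)` and `φ ∈ M_d(G)`, then `f * φ ∈ M_d(G)` with
`‖f * φ‖_{M_d} ≤ ‖f‖₁ ‖φ‖_{M_d}`; more precisely every factorization of `φ` of constant
`C` yields a factorization of `f * φ` of constant at most `‖f‖₁ * C`. -/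
theorem isMdMultiplier_conv
    {G : Type*} [Group G] [TopologicalSpace G] [IsTopologicalGroup G]
    [LocallyCompactSpace G] [SecondCountableTopology G]
    [MeasurableSpace G] [BorelSpace G] (μ : Measure G) [μ.IsHaarMeasure]
    (d : ℕ) (hd : 2 ≤ d)
    (f : G → ℂ) (hf : Integrable f μ)
    (φ : G → ℂ) (hφ : IsMdMultiplier d φ) :
    IsMdMultiplier d (conv μ f φ) ∧
    MdNorm d (conv μ f φ) ≤ (∫ y, ‖f y‖ ∂μ) * MdNorm d φ ∧
    ∀ F : Factorization.{u} d G φ,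
      ∃ F' : Factorization.{u} d G (conv μ f φ),
        F'.const ≤ (∫ y, ‖f y‖ ∂μ) * F.const :=
  isMdMultiplier_conv_general μ d hd f hf φ hφ
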